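/- Let α > 1 and x = (a_1, …, a_{n−1}, c) ∈ ℝⁿ. For every value v ∈ [0, α-entmax(x)_n] there exists b ∈ ℝ such that, with x* = (a_1, …, a_{n−1}, b, c) ∈ ℝ^{n+1}, the difference α-entmax(x)_n − α-entmax(x*)_{n+1} equals v; i.e., the difference can take any value in the interval [0, α-entmax(x)_n] by appropriate choice of the inserted entry b. -/

import Mathlib

/-!
Lowering the entmax weight of `c` from `p = α-entmax(x)_n` to `p - v` only requires raising the
threshold: the weight is continuous and antitone in the threshold and vanishes once the threshold
passes `(α - 1) c`. Raising the threshold can only lower the weights of the `a_i`, so the mass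
released is nonnegative, and the inserted entry `b` is chosen to carry exactly that mass, which
restores the normalization.
-/

/-- The coordinate value of `α`-entmax with threshold `τ` at a logit `x`. -/
noncomputable def entmaxTerm (α τ x : ℝ) : ℝ :=
  (max ((α - 1) * x - τ) 0) ^ ((1 : ℝ) / (α - 1))

open Set

section EntmaxTerm

variable {α : ℝ}

lemma entmaxTerm_antitone (hα : 1 < α) (x : ℝ) : Antitone fun τ => entmaxTerm α τ x :=
  fun _ _ h => Real.rpow_le_rpow (le_max_right _ _) (max_le_max (by linarith) le_rfl)
    (div_nonneg zero_le_one (by linarith))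

lemma continuous_entmaxTerm_threshold (hα : 1 < α) (x : ℝ) :
    Continuous fun τ => entmaxTerm α τ x :=
  (by fun_prop : Continuous fun τ : ℝ => max ((α - 1) * x - τ) 0).rpow_const
    fun _ => Or.inr (div_nonneg zero_le_one (by linarith))

lemma entmaxTerm_eq_zero_of_le (hα : 1 < α) {τ x : ℝ} (h : (α - 1) * x ≤ τ) :
    entmaxTerm α τ x = 0 := by
  rw [entmaxTerm, max_eq_right (by linarith), Real.zero_rpow (by simp; linarith)]

noncomputable def entmaxLogit (α τ r : ℝ) : ℝ := (τ + r ^ (α - 1)) / (α - 1)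

lemma entmaxTerm_entmaxLogit (hα : 1 < α) (τ : ℝ) {r : ℝ} (hr : 0 ≤ r) :
    entmaxTerm α τ (entmaxLogit α τ r) = r := by
  have hα' : α - 1 ≠ 0 := by linarith
  rw [entmaxTerm, entmaxLogit, mul_div_cancel₀ _ hα', add_sub_cancel_left,
    max_eq_left (Real.rpow_nonneg hr _), ← Real.rpow_mul hr, mul_one_div_cancel hα',
    Real.rpow_one]

lemma exists_threshold_ge_entmaxTerm_eq (hα : 1 < α) {τ x w : ℝ} (hw₀ : 0 ≤ w)
    (hw : w ≤ entmaxTerm α τ x) : ∃ τ' ≥ τ, entmaxTerm α τ' x = w := by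
  set τ₁ := max τ ((α - 1) * x)
  have hw_mem : w ∈ Icc (entmaxTerm α τ₁ x) (entmaxTerm α τ x) := by
    rw [entmaxTerm_eq_zero_of_le hα (le_max_right _ _)]
    exact ⟨hw₀, hw⟩
  obtain ⟨τ', hτ', hτ'w⟩ := intermediate_value_Icc' (le_max_left τ _)
    (continuous_entmaxTerm_threshold hα x).continuousOn hw_mem
  exact ⟨τ', hτ'.1, hτ'w⟩

end EntmaxTerm

/-- For every `v ∈ [0, α-entmax(x)_n]` there is an inserted entry `b` such that the
difference `α-entmax(x)_n − α-entmax(x*)_{n+1}` equals exactly `v`, where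
`x = (a_1, …, a_m, c)` and `x* = (a_1, …, a_m, b, c)`; the thresholds `τ` and `τs` are
characterized by the normalization conditions. -/
theorem entmax_difference_attains_any_value
    (α : ℝ) (hα : 1 < α) (m : ℕ) (a : Fin m → ℝ) (c : ℝ) (τ : ℝ)
    (hτ : ∑ i, entmaxTerm α τ ((Fin.snoc a c : Fin (m + 1) → ℝ) i) = 1) :
    ∀ v : ℝ, 0 ≤ v → v ≤ entmaxTerm α τ c →
      ∃ b τs : ℝ,
        (∑ i, entmaxTerm α τs
          ((Fin.snoc (Fin.snoc a b : Fin (m + 1) → ℝ) c : Fin (m + 2) → ℝ) i) = 1) ∧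
        entmaxTerm α τ c - entmaxTerm α τs c = v := by
  intro v hv₀ hv
  simp only [Fin.sum_univ_castSucc, Fin.snoc_castSucc, Fin.snoc_last] at hτ ⊢
  obtain ⟨τs, hττs, hc⟩ :=
    exists_threshold_ge_entmaxTerm_eq hα (w := entmaxTerm α τ c - v) (by linarith) (by linarith)
  have hmass : ∑ i, entmaxTerm α τs (a i) ≤ ∑ i, entmaxTerm α τ (a i) :=
    Finset.sum_le_sum fun i _ => entmaxTerm_antitone hα (a i) hττs
  set r := 1 - ∑ i, entmaxTerm α τs (a i) - entmaxTerm α τs c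
  refine ⟨entmaxLogit α τs r, τs, ?_, by rw [hc]; ring⟩
  rw [entmaxTerm_entmaxLogit hα τs (by linarith)]
  ring
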